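/- Let p be an odd prime and s an integer with 0 ≤ s ≤ (p-1)/2. Then Σ_{k=0}^{(p-1)/2} (q;q^2)_k (q;q^2)_{k+s} / ((q^2;q^2)_k (q^2;q^2)_{k+s}) is congruent to (-1)^{(p-1)/2} q^{(1-p^2)/4} modulo (1+q+...+q^{p-1})^2. -/

import Mathlib

open Finset Polynomial

noncomputable def qP {K : Type*} [Field K] (a q : K) (n : ℕ) : K :=
  ∏ i ∈ Finset.range n, (1 - a * q ^ i)

noncomputable def qBin {K : Type*} [Field K] (q : K) (n k : ℕ) : K :=
  if k ≤ n then qP (q ^ (n - k + 1)) q k / qP q q k else 0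

noncomputable def qq : RatFunc ℚ := RatFunc.X

noncomputable def Phi (p : ℕ) : Polynomial ℚ := ∑ i ∈ Finset.range p, Polynomial.X ^ i

/-- `f ≡ g (mod (Phi p)^r)`: the difference, as a rational function with denominator
coprime to `Phi p`, has numerator divisible by `(Phi p)^r`. -/
def CongrModPow (f g : RatFunc ℚ) (p r : ℕ) : Prop :=
  ∃ A B : Polynomial ℚ, IsCoprime B (Phi p) ∧
    (f - g) * algebraMap (Polynomial ℚ) (RatFunc ℚ) B =
      algebraMap (Polynomial ℚ) (RatFunc ℚ) ((Phi p) ^ r * A)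

/-!
Write `c k = (q;q²)_k / (q²;q²)_k`, `p = 2n + 1` and `ε = q^p - 1 = Φ_p(q) (q - 1)`.
Congruences are taken modulo `ε²` in the ring of rational functions whose denominator is prime
to `Φ_p`; it contains `q⁻¹` and every `(1 - q^m)⁻¹` with `p ∤ m`.

For the truncated sum `S(n, s)`, Gosper's algorithm gives `S(n, s + 1) - S(n, s) = G_s(n + 1)`
with `G_s(k) = -q^(2s+1) (1 - q^(2k)) / (1 - q^(2s+1)) c_k c_(k+s)`. For `s < n` both `c_(n+1)`
and `c_(n+1+s)` contain the factor `1 - q^p`, so `S(n, s) ≡ S(n, n)`. In `S(n, n)` every term but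
the first has the factor `1 - q^p`, and `q^p ≡ 1` modulo `ε` reduces it to
`-ε c_n / (1 - q^(2j+2))`. Finally, with `σ = ∑_{m<n} 1 / (1 - q^(2m+2))`,
`(-1)^n q^(n(n+1)) c_n = ∏_{m<n} (1 + ε / (1 - q^(2m+2))) ≡ 1 + ε σ`, so
`S(n, n) ≡ c_n (1 - ε σ) ≡ (-1)^n q^(-n(n+1)) (1 + ε σ) (1 - ε σ) ≡ (-1)^n q^(-n(n+1))`.
-/

section QPochhammer

variable {K : Type*} [Field K]

theorem qP_succ (a q : K) (n : ℕ) : qP a q (n + 1) = qP a q n * (1 - a * q ^ n) :=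
  prod_range_succ _ _

theorem qP_succ' (a q : K) (n : ℕ) : qP a q (n + 1) = (1 - a) * qP (a * q) q n := by
  simp only [qP, prod_range_succ', pow_succ', ← mul_assoc, pow_zero, mul_one, mul_comm (1 - a)]

theorem qP_add (a q : K) (m n : ℕ) : qP a q (m + n) = qP a q m * qP (a * q ^ m) q n := by
  simp only [qP, prod_range_add, pow_add, mul_assoc]

theorem qP_pow_pow (x : K) (a b n : ℕ) :
    qP (x ^ a) (x ^ b) n = ∏ i ∈ range n, (1 - x ^ (a + b * i)) := by
  simp only [qP, pow_add, pow_mul]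

theorem qP_mem {R : Subring K} {a q : K} (ha : a ∈ R) (hq : q ∈ R) (n : ℕ) : qP a q n ∈ R :=
  prod_mem fun i _ => R.sub_mem R.one_mem (R.mul_mem ha (R.pow_mem hq i))

end QPochhammer

theorem prod_range_pow_sub_pow {A : Type*} [CommRing A] (x : A) (n : ℕ) :
    ∏ m ∈ range n, (x ^ (2 * n + 1) - x ^ (2 * m + 2)) =
      (-1) ^ n * x ^ (n * (n + 1)) * ∏ m ∈ range n, (1 - x ^ (2 * m + 1)) := by
  induction n with
  | zero => simp
  | succ n ih =>
    have h : ∀ m ∈ range n, x ^ (2 * (n + 1) + 1) - x ^ (2 * (m + 1) + 2) =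
        x ^ 2 * (x ^ (2 * n + 1) - x ^ (2 * m + 2)) := fun m _ => by ring
    rw [prod_range_succ', prod_congr rfl h, prod_mul_distrib, prod_const, card_range, ih,
      prod_range_succ]
    ring

namespace Subring

variable {K : Type*} [Field K] (R : Subring K)

def ModEq (x f g : K) : Prop := ∃ h ∈ R, f - g = x * h

namespace ModEq

variable {R} {x f g f' g' : K}

protected theorem refl (x f : K) : R.ModEq x f f := ⟨0, R.zero_mem, by simp⟩

protected theorem rfl : R.ModEq x f f := ModEq.refl x f

protected theorem symm (h : R.ModEq x f g) : R.ModEq x g f := by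
  obtain ⟨h, hh, e⟩ := h
  exact ⟨-h, R.neg_mem hh, by linear_combination -e⟩

protected theorem trans (h₁ : R.ModEq x f g) (h₂ : R.ModEq x g g') : R.ModEq x f g' := by
  obtain ⟨a, ha, ea⟩ := h₁
  obtain ⟨b, hb, eb⟩ := h₂
  exact ⟨a + b, R.add_mem ha hb, by linear_combination ea + eb⟩

protected theorem add (h₁ : R.ModEq x f g) (h₂ : R.ModEq x f' g') :
    R.ModEq x (f + f') (g + g') := by
  obtain ⟨a, ha, ea⟩ := h₁
  obtain ⟨b, hb, eb⟩ := h₂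
  exact ⟨a + b, R.add_mem ha hb, by linear_combination ea + eb⟩

protected theorem sum {ι : Type*} {s : Finset ι} {f g : ι → K}
    (h : ∀ i ∈ s, R.ModEq x (f i) (g i)) : R.ModEq x (∑ i ∈ s, f i) (∑ i ∈ s, g i) := by
  classical
  induction s using Finset.induction_on with
  | empty => exact ModEq.rfl
  | insert i s hi ih =>
    rw [sum_insert hi, sum_insert hi]
    exact (h i (mem_insert_self i s)).add (ih fun j hj => h j (mem_insert_of_mem hj))

theorem mul_left_of_mem {c : K} (hc : c ∈ R) (h : R.ModEq x f g) :
    R.ModEq x (c * f) (c * g) := by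
  obtain ⟨a, ha, e⟩ := h
  exact ⟨c * a, R.mul_mem hc ha, by linear_combination c * e⟩

theorem mul_right_of_mem {c : K} (hc : c ∈ R) (h : R.ModEq x f g) :
    R.ModEq x (f * c) (g * c) := by
  simpa only [mul_comm _ c] using h.mul_left_of_mem hc

protected theorem mul (hf : f ∈ R) (hg' : g' ∈ R) (h₁ : R.ModEq x f g)
    (h₂ : R.ModEq x f' g') :
    R.ModEq x (f * f') (g * g') :=
  (h₂.mul_left_of_mem hf).trans (h₁.mul_right_of_mem hg')

protected theorem prod {ι : Type*} {s : Finset ι} {f g : ι → K} (hf : ∀ i ∈ s, f i ∈ R)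
    (hg : ∀ i ∈ s, g i ∈ R) (h : ∀ i ∈ s, R.ModEq x (f i) (g i)) :
    R.ModEq x (∏ i ∈ s, f i) (∏ i ∈ s, g i) := by
  classical
  induction s using Finset.induction_on with
  | empty => exact ModEq.rfl
  | insert i s hi ih =>
    rw [prod_insert hi, prod_insert hi]
    simp only [mem_insert, forall_eq_or_imp] at hf hg h
    exact ModEq.mul hf.1 (prod_mem hg.2) h.1 (ih hf.2 hg.2 h.2)

theorem mul_modulus (c : K) (h : R.ModEq x f g) : R.ModEq (c * x) (c * f) (c * g) := by
  obtain ⟨a, ha, e⟩ := h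
  exact ⟨a, ha, by linear_combination c * e⟩

theorem qP {a b q : K} (ha : a ∈ R) (hb : b ∈ R) (hq : q ∈ R) (h : R.ModEq x a b) (n : ℕ) :
    R.ModEq x (_root_.qP a q n) (_root_.qP b q n) := by
  obtain ⟨c, hc, e⟩ := h
  exact ModEq.prod (fun i _ => R.sub_mem R.one_mem (R.mul_mem ha (R.pow_mem hq i)))
    (fun i _ => R.sub_mem R.one_mem (R.mul_mem hb (R.pow_mem hq i)))
    fun i _ => ⟨-(c * q ^ i), R.neg_mem (R.mul_mem hc (R.pow_mem hq i)),
      by linear_combination -(q ^ i) * e⟩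

theorem prod_one_add_mul {ι : Type*} (s : Finset ι) {y : ι → K} (hx : x ∈ R)
    (hy : ∀ i ∈ s, y i ∈ R) :
    R.ModEq (x ^ 2) (∏ i ∈ s, (1 + x * y i)) (1 + x * ∑ i ∈ s, y i) := by
  classical
  induction s using Finset.induction_on with
  | empty => simpa using ModEq.rfl
  | insert i s hi ih =>
    simp only [mem_insert, forall_eq_or_imp] at hy
    rw [prod_insert hi, sum_insert hi]
    refine ((ih hy.2).mul_left_of_mem (R.add_mem R.one_mem (R.mul_mem hx hy.1))).trans
      ⟨y i * ∑ j ∈ s, y j, R.mul_mem hy.1 (sum_mem hy.2), by ring⟩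

end ModEq

end Subring

/-- `k[X]` localized at the polynomials coprime to `π`, as a subring of `k(X)`. -/
def RatFunc.regularAt {k : Type*} [Field k] (π : k[X]) : Subring (RatFunc k) where
  carrier := {f | ∃ N D : k[X], IsCoprime D π ∧
    f * algebraMap k[X] (RatFunc k) D = algebraMap k[X] (RatFunc k) N}
  zero_mem' := ⟨0, 1, isCoprime_one_left, by simp⟩
  one_mem' := ⟨1, 1, isCoprime_one_left, by simp⟩
  neg_mem' := by
    rintro f ⟨N, D, hD, e⟩
    exact ⟨-N, D, hD, by rw [map_neg, ← e, neg_mul]⟩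
  mul_mem' := by
    rintro f g ⟨N₁, D₁, h₁, e₁⟩ ⟨N₂, D₂, h₂, e₂⟩
    exact ⟨N₁ * N₂, D₁ * D₂, h₁.mul_left h₂, by
      simp only [map_mul, ← e₁, ← e₂]; ring⟩
  add_mem' := by
    rintro f g ⟨N₁, D₁, h₁, e₁⟩ ⟨N₂, D₂, h₂, e₂⟩
    exact ⟨N₁ * D₂ + N₂ * D₁, D₁ * D₂, h₁.mul_left h₂, by
      simp only [map_add, map_mul, ← e₁, ← e₂]; ring⟩

namespace RatFunc

variable {k : Type*} [Field k] {π : k[X]}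

theorem algebraMap_mem_regularAt (N : k[X]) : algebraMap k[X] (RatFunc k) N ∈ regularAt π :=
  ⟨N, 1, isCoprime_one_left, by simp⟩

theorem inv_algebraMap_mem_regularAt (hπ : ¬IsUnit π) {D : k[X]} (hD : IsCoprime D π) :
    (algebraMap k[X] (RatFunc k) D)⁻¹ ∈ regularAt π := by
  have hD0 : D ≠ 0 := by rintro rfl; exact hπ (isCoprime_zero_left.mp hD)
  refine ⟨1, D, hD, ?_⟩
  rw [inv_mul_cancel₀ ((map_ne_zero_iff _ (algebraMap_injective k)).mpr hD0), map_one]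

end RatFunc

open RatFunc (regularAt)

theorem Phi_mul_X_sub_one (p : ℕ) : Phi p * (X - 1) = X ^ p - 1 := geom_sum_mul X p

theorem Phi_eq_cyclotomic {p : ℕ} (hp : p.Prime) : Phi p = cyclotomic p ℚ := by
  have := Fact.mk hp
  rw [cyclotomic_prime]
  rfl

theorem not_isUnit_Phi {p : ℕ} (hp : p.Prime) : ¬IsUnit (Phi p) := by
  rw [Phi_eq_cyclotomic hp]
  exact (cyclotomic.irreducible_rat hp.pos).not_isUnit

theorem isCoprime_X_Phi {p : ℕ} (hp : p.Prime) : IsCoprime (X : ℚ[X]) (Phi p) :=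
  ⟨X ^ (p - 1), -(X - 1), by
    rw [← pow_succ, Nat.sub_add_cancel hp.pos, neg_mul, mul_comm, Phi_mul_X_sub_one]; ring⟩

theorem isCoprime_one_sub_X_pow_Phi {p m : ℕ} (hp : p.Prime) (hm : ¬p ∣ m) :
    IsCoprime (1 - X ^ m : ℚ[X]) (Phi p) := by
  have hm0 : 0 < m := Nat.pos_of_ne_zero (by rintro rfl; exact hm (dvd_zero p))
  rw [Phi_eq_cyclotomic hp, ← neg_sub, IsCoprime.neg_left_iff,
    ← prod_cyclotomic_eq_X_pow_sub_one hm0]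
  exact IsCoprime.prod_left fun d hd =>
    cyclotomic.isCoprime_rat (by rintro rfl; exact hm (Nat.dvd_of_mem_divisors hd))

theorem not_dvd_of_lt_two_mul {p m : ℕ} (h0 : 0 < m) (h2 : m < 2 * p) (hne : m ≠ p) :
    ¬p ∣ m := by
  rintro ⟨c, rfl⟩
  have hc : c < 2 := by nlinarith
  interval_cases c <;> omega

theorem one_sub_qq_pow_ne_zero {m : ℕ} (hm : m ≠ 0) : (1 : RatFunc ℚ) - qq ^ m ≠ 0 := by
  have h : algebraMap ℚ[X] (RatFunc ℚ) (X ^ m - C 1) ≠ 0 :=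
    (map_ne_zero_iff _ (RatFunc.algebraMap_injective ℚ)).mpr
      (X_pow_sub_C_ne_zero (Nat.pos_of_ne_zero hm) 1)
  rw [← neg_sub, neg_ne_zero]
  simpa [qq, RatFunc.algebraMap_X] using h

theorem qP_qq_pow_ne_zero {a : ℕ} (ha : a ≠ 0) (b n : ℕ) : qP (qq ^ a) (qq ^ b) n ≠ 0 := by
  rw [qP_pow_pow]
  exact prod_ne_zero_iff.mpr fun i _ => one_sub_qq_pow_ne_zero (by omega)

noncomputable def pochRatio (k : ℕ) : RatFunc ℚ := qP qq (qq ^ 2) k / qP (qq ^ 2) (qq ^ 2) k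

noncomputable def pochSum (n s : ℕ) : RatFunc ℚ :=
  ∑ k ∈ range (n + 1), pochRatio k * pochRatio (k + s)

theorem pochRatio_succ (k : ℕ) :
    pochRatio (k + 1) = pochRatio k * (1 - qq ^ (2 * k + 1)) / (1 - qq ^ (2 * k + 2)) := by
  rw [pochRatio, pochRatio, qP_succ, qP_succ, mul_div_mul_comm, mul_div_assoc]
  congr 3 <;> ring

noncomputable def pochAntidiff (s k : ℕ) : RatFunc ℚ :=
  -qq ^ (2 * s + 1) * (1 - qq ^ (2 * k)) / (1 - qq ^ (2 * s + 1)) *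
    (pochRatio k * pochRatio (k + s))

theorem pochRatio_mul_sub (s k : ℕ) :
    pochRatio k * (pochRatio (k + s + 1) - pochRatio (k + s)) =
      pochAntidiff s (k + 1) - pochAntidiff s k := by
  have h₁ := one_sub_qq_pow_ne_zero (m := 2 * s + 1) (by omega)
  have h₂ := one_sub_qq_pow_ne_zero (m := 2 * k + 2) (by omega)
  have h₃ := one_sub_qq_pow_ne_zero (m := 2 * (k + s) + 2) (by omega)
  rw [pochAntidiff, pochAntidiff, show k + 1 + s = k + s + 1 by ring, pochRatio_succ k,
    pochRatio_succ (k + s)]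
  field_simp
  ring

theorem pochSum_succ_sub (n s : ℕ) :
    pochSum n (s + 1) - pochSum n s = pochAntidiff s (n + 1) := by
  simp only [pochSum, ← sum_sub_distrib, ← mul_sub, ← add_assoc, pochRatio_mul_sub]
  rw [sum_range_sub]
  simp [pochAntidiff]

theorem pochRatio_add_succ {p n : ℕ} (hpn : p = 2 * n + 1) (t : ℕ) :
    pochRatio (n + 1 + t) = (1 - qq ^ p) * pochRatio n *
      (qP (qq ^ (p + 2)) (qq ^ 2) t / qP (qq ^ (p + 1)) (qq ^ 2) (t + 1)) := by
  rw [pochRatio, pochRatio, add_assoc, add_comm 1 t, qP_add qq, qP_add (qq ^ 2), qP_succ',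
    show qq * (qq ^ 2) ^ n = qq ^ p by rw [hpn]; ring,
    show qq ^ p * qq ^ 2 = qq ^ (p + 2) by ring,
    show qq ^ 2 * (qq ^ 2) ^ n = qq ^ (p + 1) by rw [hpn]; ring]
  ring

theorem pow_mul_pochRatio_eq {p n : ℕ} (hpn : p = 2 * n + 1) :
    (-1) ^ n * qq ^ (n * (n + 1)) * pochRatio n =
      ∏ m ∈ range n, (1 + (qq ^ p - 1) * (1 - qq ^ (2 * m + 2))⁻¹) := by
  have h : ∀ m ∈ range n, 1 + (qq ^ p - 1) * (1 - qq ^ (2 * m + 2))⁻¹ =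
      (qq ^ p - qq ^ (2 * m + 2)) / (1 - qq ^ (2 * m + 2)) := fun m _ => by
    field_simp [one_sub_qq_pow_ne_zero (m := 2 * m + 2) (by omega)]
    ring
  rw [prod_congr rfl h, prod_div_distrib, hpn, prod_range_pow_sub_pow, pochRatio, mul_div_assoc]
  congr 2 <;> exact prod_congr rfl fun m _ => by ring

section Supercongruence

variable {p n : ℕ}

theorem qq_mem_regularAt : qq ∈ regularAt (Phi p) := by
  simpa only [qq, RatFunc.algebraMap_X] using RatFunc.algebraMap_mem_regularAt (π := Phi p) X

theorem inv_qq_mem_regularAt (hp : p.Prime) : qq⁻¹ ∈ regularAt (Phi p) := by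
  simpa only [qq, RatFunc.algebraMap_X] using
    RatFunc.inv_algebraMap_mem_regularAt (not_isUnit_Phi hp) (isCoprime_X_Phi hp)

theorem inv_one_sub_qq_pow_mem_regularAt (hp : p.Prime) {m : ℕ} (hm : ¬p ∣ m) :
    (1 - qq ^ m)⁻¹ ∈ regularAt (Phi p) := by
  simpa only [qq, map_sub, map_one, map_pow, RatFunc.algebraMap_X] using
    RatFunc.inv_algebraMap_mem_regularAt (not_isUnit_Phi hp) (isCoprime_one_sub_X_pow_Phi hp hm)

theorem inv_qP_qq_pow_mem_regularAt (hp : p.Prime) {a b n : ℕ}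
    (h : ∀ i < n, ¬p ∣ a + b * i) :
    (qP (qq ^ a) (qq ^ b) n)⁻¹ ∈ regularAt (Phi p) := by
  rw [qP_pow_pow, ← prod_inv_distrib]
  exact prod_mem fun i hi => inv_one_sub_qq_pow_mem_regularAt hp (h i (mem_range.mp hi))

theorem congrModPow_of_modEq {f g : RatFunc ℚ} {r : ℕ}
    (h : (regularAt (Phi p)).ModEq ((qq ^ p - 1) ^ r) f g) : CongrModPow f g p r := by
  obtain ⟨h, ⟨N, D, hD, e⟩, hfg⟩ := h
  refine ⟨(X - 1) ^ r * N, D, hD, ?_⟩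
  rw [hfg, mul_assoc, e, ← mul_assoc, ← mul_pow, Phi_mul_X_sub_one]
  simp [qq, RatFunc.algebraMap_X]

theorem pochRatio_mem_regularAt (hp : p.Prime) (hpn : p = 2 * n + 1) {k : ℕ} (hk : k < p) :
    pochRatio k ∈ regularAt (Phi p) := by
  rw [pochRatio, div_eq_mul_inv]
  exact mul_mem (qP_mem qq_mem_regularAt (pow_mem qq_mem_regularAt 2) k)
    (inv_qP_qq_pow_mem_regularAt hp fun i hi =>
      not_dvd_of_lt_two_mul (by omega) (by omega) (by omega))

theorem exists_pochRatio_add_succ_eq (hp : p.Prime) (hpn : p = 2 * n + 1) {t : ℕ} (ht : t < n) :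
    ∃ u ∈ regularAt (Phi p), pochRatio (n + 1 + t) = (qq ^ p - 1) * u := by
  have hq := qq_mem_regularAt (p := p)
  have hρ : qP (qq ^ (p + 2)) (qq ^ 2) t * (qP (qq ^ (p + 1)) (qq ^ 2) (t + 1))⁻¹ ∈
      regularAt (Phi p) :=
    mul_mem (qP_mem (pow_mem hq _) (pow_mem hq 2) t) (inv_qP_qq_pow_mem_regularAt hp
      fun i hi => not_dvd_of_lt_two_mul (by omega) (by omega) (by omega))
  refine ⟨-(pochRatio n * _),
    neg_mem (mul_mem (pochRatio_mem_regularAt hp hpn (by omega)) hρ), ?_⟩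
  rw [pochRatio_add_succ hpn]
  ring

theorem pochSum_succ_modEq (hp : p.Prime) (hpn : p = 2 * n + 1) {s : ℕ} (hs : s < n) :
    (regularAt (Phi p)).ModEq ((qq ^ p - 1) ^ 2) (pochSum n (s + 1)) (pochSum n s) := by
  obtain ⟨u, hu, hu_eq⟩ := exists_pochRatio_add_succ_eq hp hpn (t := 0) (by omega)
  obtain ⟨v, hv, hv_eq⟩ := exists_pochRatio_add_succ_eq hp hpn hs
  rw [add_zero] at hu_eq
  have hq := qq_mem_regularAt (p := p)
  refine ⟨-qq ^ (2 * s + 1) * (1 - qq ^ (2 * (n + 1))) * (1 - qq ^ (2 * s + 1))⁻¹ * (u * v),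
    mul_mem (mul_mem (mul_mem (neg_mem (pow_mem hq _)) (sub_mem (one_mem _) (pow_mem hq _)))
      (inv_one_sub_qq_pow_mem_regularAt hp
        (not_dvd_of_lt_two_mul (by omega) (by omega) (by omega)))) (mul_mem hu hv), ?_⟩
  rw [pochSum_succ_sub, pochAntidiff, hu_eq, hv_eq]
  ring

theorem pochSum_modEq_pochSum_self (hp : p.Prime) (hpn : p = 2 * n + 1) {s : ℕ} (hs : s ≤ n) :
    (regularAt (Phi p)).ModEq ((qq ^ p - 1) ^ 2) (pochSum n s) (pochSum n n) := by
  induction hs using Nat.decreasingInduction with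
  | self => exact Subring.ModEq.rfl
  | of_succ s hs ih => exact (pochSum_succ_modEq hp hpn hs).symm.trans ih

theorem pochRatio_mul_pochRatio_modEq (hp : p.Prime) (hpn : p = 2 * n + 1) {j : ℕ}
    (hj : j < n) :
    (regularAt (Phi p)).ModEq ((qq ^ p - 1) ^ 2) (pochRatio (j + 1) * pochRatio (n + 1 + j))
      (-(qq ^ p - 1) * pochRatio n * (1 - qq ^ (2 * j + 2))⁻¹) := by
  set R := regularAt (Phi p)
  set A := qP (qq ^ (p + 2)) (qq ^ 2) j
  set B := qP (qq ^ (p + 1)) (qq ^ 2) (j + 1)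
  have hq : qq ∈ R := qq_mem_regularAt
  have hA : R.ModEq (qq ^ p - 1) A (qP (qq ^ 2) (qq ^ 2) j) :=
    Subring.ModEq.qP (pow_mem hq _) (pow_mem hq _) (pow_mem hq _)
      ⟨qq ^ 2, pow_mem hq 2, by ring⟩ j
  have hB : R.ModEq (qq ^ p - 1) B (qP qq (qq ^ 2) (j + 1)) :=
    Subring.ModEq.qP (pow_mem hq _) hq (pow_mem hq _) ⟨qq, hq, by ring⟩ (j + 1)
  have hD : (qP (qq ^ 2) (qq ^ 2) (j + 1) * B)⁻¹ ∈ R := by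
    rw [mul_inv]
    exact mul_mem
      (inv_qP_qq_pow_mem_regularAt hp fun i hi =>
        not_dvd_of_lt_two_mul (by omega) (by omega) (by omega))
      (inv_qP_qq_pow_mem_regularAt hp fun i hi =>
        not_dvd_of_lt_two_mul (by omega) (by omega) (by omega))
  have key : R.ModEq (qq ^ p - 1) (pochRatio (j + 1) * (A / B)) (1 - qq ^ (2 * j + 2))⁻¹ := by
    have h := (Subring.ModEq.mul (qP_mem hq (pow_mem hq 2) _)
      (qP_mem (pow_mem hq 2) (pow_mem hq 2) _) hB.symm hA).mul_right_of_mem hD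
    convert h using 1
    · rw [pochRatio]
      ring
    · have hB0 : B ≠ 0 := qP_qq_pow_ne_zero (by omega) _ _
      have hE0 := qP_qq_pow_ne_zero (a := 2) (by omega) 2 j
      rw [qP_succ, show qq ^ 2 * (qq ^ 2) ^ j = qq ^ (2 * j + 2) by ring]
      field_simp
  have h := (key.mul_modulus (qq ^ p - 1)).mul_left_of_mem
    (neg_mem (pochRatio_mem_regularAt hp hpn (k := n) (by omega)))
  rw [← sq] at h
  convert h using 1
  · rw [pochRatio_add_succ hpn j]
    ring
  · ring

theorem pochSum_self_modEq (hp : p.Prime) (hpn : p = 2 * n + 1) :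
    (regularAt (Phi p)).ModEq ((qq ^ p - 1) ^ 2) (pochSum n n)
      ((-1) ^ n * qq ^ (n * (n + 1)))⁻¹ := by
  set R := regularAt (Phi p)
  set ε := qq ^ p - 1
  set τ : RatFunc ℚ := (-1) ^ n * qq ^ (n * (n + 1))
  set σ := ∑ m ∈ range n, (1 - qq ^ (2 * m + 2))⁻¹ with hσ_def
  have hq : qq ∈ R := qq_mem_regularAt
  have hε : ε ∈ R := sub_mem (pow_mem hq p) (one_mem R)
  have hy : ∀ m ∈ range n, (1 - qq ^ (2 * m + 2))⁻¹ ∈ R := fun m hm =>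
    inv_one_sub_qq_pow_mem_regularAt hp
      (not_dvd_of_lt_two_mul (by omega) (by have := mem_range.mp hm; omega) (by omega))
  have hσ : σ ∈ R := sum_mem hy
  have hτ : τ⁻¹ ∈ R := by
    rw [mul_inv, ← inv_pow, ← inv_pow, inv_neg_one]
    exact mul_mem (pow_mem (neg_mem (one_mem R)) n)
      (pow_mem (inv_qq_mem_regularAt hp) _)
  have hτ0 : τ ≠ 0 := mul_ne_zero (pow_ne_zero _ (neg_ne_zero.mpr one_ne_zero))
    (pow_ne_zero _ (by simpa [qq] using RatFunc.X_ne_zero))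
  have hc : R.ModEq (ε ^ 2) (pochRatio n) (τ⁻¹ * (1 + ε * σ)) := by
    have h := (Subring.ModEq.prod_one_add_mul (range n) hε hy).mul_left_of_mem hτ
    rwa [← pow_mul_pochRatio_eq hpn, inv_mul_cancel_left₀ hτ0] at h
  have hS : R.ModEq (ε ^ 2) (pochSum n n) (pochRatio n * (1 - ε * σ)) := by
    have h := (Subring.ModEq.sum fun j hj =>
      pochRatio_mul_pochRatio_modEq hp hpn (mem_range.mp hj)).add
        (Subring.ModEq.refl (ε ^ 2) (pochRatio n))
    convert h using 1
    · have h₀ : pochRatio 0 = 1 := by simp [pochRatio, qP]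
      rw [pochSum, sum_range_succ', zero_add, h₀, one_mul]
      exact congrArg (· + _)
        (sum_congr rfl fun i _ => by rw [show i + 1 + n = n + 1 + i by ring])
    · rw [hσ_def, mul_sum, mul_sub, mul_one, mul_sum, sub_eq_neg_add, ← sum_neg_distrib]
      exact congrArg (· + _) (sum_congr rfl fun i _ => by ring)
  exact hS.trans ((hc.mul_right_of_mem (sub_mem (one_mem R) (mul_mem hε hσ))).trans
    ⟨-(τ⁻¹ * σ ^ 2), neg_mem (mul_mem hτ (pow_mem hσ 2)), by ring⟩)

end Supercongruence

theorem stmt_16 (p : ℕ) (hp : p.Prime) (hodd : Odd p) (s : ℕ) (hs : s ≤ (p - 1) / 2) :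
    CongrModPow
      (∑ k ∈ Finset.range ((p - 1) / 2 + 1),
        qP qq (qq ^ 2) k * qP qq (qq ^ 2) (k + s) /
          (qP (qq ^ 2) (qq ^ 2) k * qP (qq ^ 2) (qq ^ 2) (k + s)))
      ((-1) ^ ((p - 1) / 2) * qq ^ ((1 - (p : ℤ) ^ 2) / 4)) p 2 := by
  obtain ⟨n, rfl⟩ := hodd
  have hn : (2 * n + 1 - 1) / 2 = n := by omega
  have hsum : (∑ k ∈ range (n + 1), qP qq (qq ^ 2) k * qP qq (qq ^ 2) (k + s) /
      (qP (qq ^ 2) (qq ^ 2) k * qP (qq ^ 2) (qq ^ 2) (k + s))) = pochSum n s :=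
    sum_congr rfl fun k _ => by rw [pochRatio, pochRatio, div_mul_div_comm]
  have hexp : (1 - ((2 * n + 1 : ℕ) : ℤ) ^ 2) / 4 = -((n * (n + 1) : ℕ) : ℤ) := by
    push_cast
    rw [show (1 - (2 * (n : ℤ) + 1) ^ 2) = 4 * -(n * (n + 1)) by ring,
      Int.mul_ediv_cancel_left _ four_ne_zero]
  rw [hn, hsum, hexp, zpow_neg, zpow_natCast, ← inv_neg_one, inv_pow, ← mul_inv]
  exact congrModPow_of_modEq
    ((pochSum_modEq_pochSum_self hp rfl (by omega)).trans (pochSum_self_modEq hp rfl))
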